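/- arXiv:2007.06304 — 5 statements merged into one kernel-verified Lean document; each statement's English description precedes it below -/
import Mathlib

section
/- Let x : N → ℝ be a finite family of agent positions and let z be a point minimizing the total distance ∑_{i∈N} |x_i − t| over t in a set Z ⊆ ℝ containing z. If a single agent i with x_i < p ≤ z (or x_i > p ≥ z) for some p ∈ ℝ is moved to p, then z still minimizes ∑ over the new position profile, i.e., for every y ∈ Z, |p − z| + ∑_{j≠i} |x_j − z| ≤ |p − y| + ∑_{j≠i} |x_j − y|. -/
open Finset

/-- The key step: on the line, `|x i - z|` splits at any `p` between `x i` and `z`, while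
`|x i - y| ≤ |x i - p| + |p - y|` for every `y`, so moving agent `i` to `p` lowers the cost of `z`
by exactly `|x i - p|` and that of any other point by at most as much. -/
theorem abs_add_sum_erase_le_of_mem_segment {ι : Type*} [DecidableEq ι] {s : Finset ι}
    {x : ι → ℝ} {i : ι} (hi : i ∈ s) {p z y : ℝ} (hp : p ∈ segment ℝ (x i) z)
    (hzy : ∑ j ∈ s, |x j - z| ≤ ∑ j ∈ s, |x j - y|) :
    |p - z| + ∑ j ∈ s.erase i, |x j - z| ≤ |p - y| + ∑ j ∈ s.erase i, |x j - y| := by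
  have hsplit : |x i - p| + |p - z| = |x i - z| := dist_add_dist_of_mem_segment hp
  have htriangle : |x i - y| ≤ |x i - p| + |p - y| := abs_sub_le (x i) p y
  rw [← add_sum_erase s _ hi, ← add_sum_erase s (fun j => |x j - y|) hi] at hzy
  linarith

theorem stmt_2_general {N : Type*} [Fintype N] [DecidableEq N]
    (x : N → ℝ) (Z : Set ℝ) (z : ℝ)
    (hmin : ∀ t ∈ Z, ∑ j, |x j - z| ≤ ∑ j, |x j - t|)
    (i : N) (p : ℝ)
    (hp : (x i < p ∧ p ≤ z) ∨ (x i > p ∧ p ≥ z)) :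
    ∀ y ∈ Z,
      |p - z| + ∑ j ∈ Finset.univ.erase i, |x j - z| ≤
        |p - y| + ∑ j ∈ Finset.univ.erase i, |x j - y| := by
  have hseg : p ∈ segment ℝ (x i) z := by
    rw [segment_eq_uIcc, Set.mem_uIcc]
    rcases hp with ⟨hxp, hpz⟩ | ⟨hpx, hzp⟩
    · exact Or.inl ⟨hxp.le, hpz⟩
    · exact Or.inr ⟨hzp, hpx.le⟩
  intro y hy
  exact abs_add_sum_erase_le_of_mem_segment (mem_univ i) hseg (hmin y hy)

theorem stmt_2 {N : Type*} [Fintype N] [DecidableEq N]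
    (x : N → ℝ) (Z : Set ℝ) (z : ℝ)
    (hz : z ∈ Z)
    (hmin : ∀ t ∈ Z, ∑ j, |x j - z| ≤ ∑ j, |x j - t|)
    (i : N) (p : ℝ)
    (hp : (x i < p ∧ p ≤ z) ∨ (x i > p ∧ p ≥ z)) :
    ∀ y ∈ Z,
      |p - z| + ∑ j ∈ Finset.univ.erase i, |x j - z| ≤
        |p - y| + ∑ j ∈ Finset.univ.erase i, |x j - y| :=
  stmt_2_general x Z z hmin i p hp
end

section
/- Let z < y be real numbers, let x : S → ℝ be positions with z ≤ x_i ≤ y for all i ∈ S, and suppose there is a subset T ⊆ S with |T| ≥ |S|/2 such that |x_i − z| ≤ |x_i − y| for all i ∈ T. Then ∑_{i∈S} |x_i − z| ≤ (3/4)·|S|·(y − z) and ∑_{i∈S} |x_i − y| ≥ (1/4)·|S|·(y − z). -/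
/-!
Every position lies in `[z, y]`, so `|xᵢ - z| + |xᵢ - y| = y - z` for each agent: the two sums add
up to `|S| (y - z)`, and it suffices to bound the first. An agent of `T` contributes at most
`(y - z) / 2` to it and any other agent at most `y - z`; as `T` holds at least half of the agents,
the total is at most `(|S| - |T| / 2) (y - z) ≤ (3/4) |S| (y - z)`.
-/

open Finset

lemma abs_sub_add_abs_sub_of_mem_Icc {α : Type*} [AddCommGroup α] [LinearOrder α]
    [IsOrderedAddMonoid α] {z y x : α} (hx : x ∈ Set.Icc z y) :
    |x - z| + |x - y| = y - z := by
  rw [abs_of_nonneg (sub_nonneg.2 hx.1), abs_of_nonpos (sub_nonpos.2 hx.2)]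
  abel

lemma Finset.sum_le_of_le_of_subset_le {ι R : Type*} [Ring R] [LinearOrder R]
    [IsOrderedRing R] {S T : Finset ι} (hTS : T ⊆ S) {f : ι → R} {a b : R}
    (hS : ∀ i ∈ S, f i ≤ a) (hT : ∀ i ∈ T, f i ≤ b) :
    ∑ i ∈ S, f i ≤ #T * b + (#S - #T) * a := by
  classical
  have hsdiff : (#(S \ T) : R) = #S - #T := by
    rw [card_sdiff_of_subset hTS, Nat.cast_sub (card_le_card hTS)]
  rw [← sum_sdiff hTS, ← hsdiff, ← nsmul_eq_mul, ← nsmul_eq_mul, add_comm (_ • b)]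
  exact add_le_add (sum_le_card_nsmul _ _ _ fun i hi => hS i (mem_sdiff.1 hi).1)
    (sum_le_card_nsmul _ _ _ hT)

theorem stmt_5 {ι : Type*} (S T : Finset ι) (x : ι → ℝ) (z y : ℝ)
    (hzy : z < y)
    (hx : ∀ i ∈ S, z ≤ x i ∧ x i ≤ y)
    (hTS : T ⊆ S)
    (hTcard : (T.card : ℝ) ≥ (S.card : ℝ) / 2)
    (hT : ∀ i ∈ T, |x i - z| ≤ |x i - y|) :
    ∑ i ∈ S, |x i - z| ≤ (3/4) * (S.card : ℝ) * (y - z) ∧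
    ∑ i ∈ S, |x i - y| ≥ (1/4) * (S.card : ℝ) * (y - z) := by
  have hsplit (i) (hi : i ∈ S) := abs_sub_add_abs_sub_of_mem_Icc (hx i hi)
  have hfar : ∀ i ∈ S, |x i - z| ≤ y - z := fun i hi => by
    linarith [hsplit i hi, abs_nonneg (x i - y)]
  have hnear : ∀ i ∈ T, |x i - z| ≤ (y - z) / 2 := fun i hi => by
    linarith [hsplit i (hTS hi), hT i hi]
  have hleft := sum_le_of_le_of_subset_le hTS hfar hnear
  have htotal : ∑ i ∈ S, |x i - z| + ∑ i ∈ S, |x i - y| = #S * (y - z) := by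
    rw [← sum_add_distrib, sum_congr rfl hsplit, sum_const, nsmul_eq_mul]
  have hslack : 0 ≤ ((T.card : ℝ) - S.card / 2) * (y - z) :=
    mul_nonneg (sub_nonneg.2 hTcard) (sub_nonneg.2 hzy.le)
  constructor <;> linarith
end

section
/- Let λ > 0, ℓ ≥ 1, and y₁ < y₂. Define SC(t) = ℓ(λ/2 + λ/(4ℓ))|t − y₁| + ℓ(λ/2 − λ/(4ℓ))|t − y₂| + (ℓ+1)λ|t − y₂|. Then SC(y₂) = λ(2ℓ+1)(y₂ − y₁)/4, and for every z ≤ (y₁+y₂)/2, SC(z) ≥ λ(2ℓ+1)(y₂ − y₁)/2, hence SC(z) ≥ 2·SC(y₂). -/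
theorem stmt_15 (lam y₁ y₂ : ℝ) (hlam : 0 < lam) (hy : y₁ < y₂)
    (ℓ : ℕ) (hℓ : 1 ≤ ℓ)
    (SC : ℝ → ℝ)
    (hSC : ∀ t, SC t = (ℓ : ℝ) * (lam / 2 + lam / (4 * ℓ)) * |t - y₁|
      + (ℓ : ℝ) * (lam / 2 - lam / (4 * ℓ)) * |t - y₂|
      + ((ℓ : ℝ) + 1) * lam * |t - y₂|) :
    SC y₂ = lam * (2 * (ℓ : ℝ) + 1) * (y₂ - y₁) / 4 ∧
    ∀ z ≤ (y₁ + y₂) / 2,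
      SC z ≥ lam * (2 * (ℓ : ℝ) + 1) * (y₂ - y₁) / 2 ∧ SC z ≥ 2 * SC y₂ := by
  have hL : (1:ℝ) ≤ (ℓ:ℝ) := by exact_mod_cast hℓ
  have hL0 : (ℓ:ℝ) ≠ 0 := by linarith
  have hSC' : ∀ t, SC t = lam * (2 * (ℓ:ℝ) + 1) / 4 * |t - y₁|
      + 3 * (lam * (2 * (ℓ:ℝ) + 1)) / 4 * |t - y₂| := by
    intro t
    rw [hSC t]
    field_simp
    ring
  have h1 : SC y₂ = lam * (2 * (ℓ : ℝ) + 1) * (y₂ - y₁) / 4 := by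
    rw [hSC' y₂]
    rw [show y₂ - y₂ = 0 by ring, abs_zero, abs_of_nonneg (by linarith : (0:ℝ) ≤ y₂ - y₁)]
    ring
  refine ⟨h1, fun z hz => ?_⟩
  have habs2 : |z - y₂| = y₂ - z := by
    rw [abs_of_nonpos (by linarith)]; ring
  have habs1 : y₁ - z ≤ |z - y₁| := by
    rw [abs_sub_comm]; exact le_abs_self _
  have hc : (0:ℝ) ≤ lam * (2 * (ℓ:ℝ) + 1) := by positivity
  have key : SC z ≥ lam * (2 * (ℓ : ℝ) + 1) * (y₂ - y₁) / 2 := by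
    rw [hSC' z, habs2]
    nlinarith [mul_nonneg hc (show (0:ℝ) ≤ |z - y₁| - (z - y₁) by linarith [le_abs_self (z - y₁)]),
      mul_nonneg hc (show (0:ℝ) ≤ (y₂ - z) - (y₂ - y₁)/2 by linarith)]
  exact ⟨key, by rw [h1]; linarith⟩
end

section
/- Let λ > 0, μ ≥ 1, and y ≥ 1/2. Define SC(t) for agents: μλ at position 0, (μ+1)(λ/2) at position 0, and (μ+1)(λ/2) at position 1. Then SC(0) = (μ+1)λ/2, SC(y) ≥ (μ+1)λ/2 + μλy, hence SC(y)/SC(0) ≥ 1 + μ/(μ+1), which tends to 2 as μ → ∞. -/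
/-! The agents at 0 of weight `μλ` pay `μλy` at `y`, while the two groups of weight `(μ+1)λ/2`
at 0 and 1 together pay at least `(μ+1)λ/2` wherever the facility is, by the triangle inequality;
at 0 only the group at 1 pays. With `y ≥ 1/2` this gives the ratio `1 + μ/(μ+1)`. -/

theorem one_le_abs_add_abs_sub_one (t : ℝ) : 1 ≤ |t| + |t - 1| := by
  simpa using abs_sub t (t - 1)

theorem stmt_16_general (lam y : ℝ) (hlam : 0 < lam) (hy : y ≥ 1/2)
    (μ : ℕ)
    (SC : ℝ → ℝ)
    (hSC : ∀ t, SC t = (μ : ℝ) * lam * |t - 0|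
      + ((μ : ℝ) + 1) * (lam / 2) * |t - 0|
      + ((μ : ℝ) + 1) * (lam / 2) * |t - 1|) :
    SC 0 = ((μ : ℝ) + 1) * lam / 2 ∧
    SC y ≥ ((μ : ℝ) + 1) * lam / 2 + (μ : ℝ) * lam * y ∧
    SC y / SC 0 ≥ 1 + (μ : ℝ) / ((μ : ℝ) + 1) ∧
    Filter.Tendsto (fun m : ℕ => 1 + (m : ℝ) / ((m : ℝ) + 1))
      Filter.atTop (nhds 2) := by
  have hμ : (0 : ℝ) ≤ μ := μ.cast_nonneg
  have hSC0 : SC 0 = ((μ : ℝ) + 1) * lam / 2 := by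
    rw [hSC]; simp only [sub_self, zero_sub, abs_zero, abs_neg, abs_one]; ring
  have hSCy : SC y ≥ ((μ : ℝ) + 1) * lam / 2 + (μ : ℝ) * lam * y := by
    have hweight : (0 : ℝ) ≤ (μ + 1) * (lam / 2) := by positivity
    rw [hSC, sub_zero]
    nlinarith [mul_le_mul_of_nonneg_left (le_abs_self y) (mul_nonneg hμ hlam.le),
      mul_le_mul_of_nonneg_left (one_le_abs_add_abs_sub_one y) hweight]
  refine ⟨hSC0, hSCy, ?_, ?_⟩
  · have hratio : (1 + (μ : ℝ) / (μ + 1)) * ((μ + 1) * lam / 2)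
        = (μ + 1) * lam / 2 + μ * lam * (1 / 2) := by
      field_simp
    rw [ge_iff_le, le_div_iff₀ (by rw [hSC0]; positivity), hSC0, hratio]
    linarith [mul_le_mul_of_nonneg_left hy (mul_nonneg hμ hlam.le)]
  · simpa [one_add_one_eq_two] using (tendsto_natCast_div_add_atTop (1 : ℝ)).const_add 1

theorem stmt_16 (lam y : ℝ) (hlam : 0 < lam) (hy : y ≥ 1/2)
    (μ : ℕ) (hμ : 1 ≤ μ)
    (SC : ℝ → ℝ)
    (hSC : ∀ t, SC t = (μ : ℝ) * lam * |t - 0|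
      + ((μ : ℝ) + 1) * (lam / 2) * |t - 0|
      + ((μ : ℝ) + 1) * (lam / 2) * |t - 1|) :
    SC 0 = ((μ : ℝ) + 1) * lam / 2 ∧
    SC y ≥ ((μ : ℝ) + 1) * lam / 2 + (μ : ℝ) * lam * y ∧
    SC y / SC 0 ≥ 1 + (μ : ℝ) / ((μ : ℝ) + 1) ∧
    Filter.Tendsto (fun m : ℕ => 1 + (m : ℝ) / ((m : ℝ) + 1))
      Filter.atTop (nhds 2) :=
  stmt_16_general lam y hlam hy μ SC hSC
end

section
/- Let λ > 0, μ ≥ 1, and y ≥ 1. Define SC(t) for agents: μλ at position 0, (μ+1)(λ/2) at position 0, and (μ+1)(λ/2) at position 1. Then SC(0) = (μ+1)λ/2 and SC(y) = μλy + (μ+1)(λ/2)y + (μ+1)(λ/2)(y − 1) ≥ (3μ+1)λ/2, so SC(y)/SC(0) ≥ (3μ+1)/(μ+1), which tends to 3 as μ → ∞. -/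
open Filter Topology

theorem tendsto_three_mul_add_one_div_add_one :
    Tendsto (fun m : ℕ => (3 * (m : ℝ) + 1) / ((m : ℝ) + 1)) atTop (𝓝 3) := by
  simpa [add_comm, mul_comm] using
    tendsto_add_mul_div_add_mul_atTop_nhds (1 : ℝ) 1 3 one_ne_zero

theorem stmt_18_general (lam y : ℝ) (hlam : 0 < lam) (hy : y ≥ 1)
    (μ : ℕ)
    (SC : ℝ → ℝ)
    (hSC : ∀ t, SC t = (μ : ℝ) * lam * |t - 0|
      + ((μ : ℝ) + 1) * (lam / 2) * |t - 0|
      + ((μ : ℝ) + 1) * (lam / 2) * |t - 1|) :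
    SC 0 = ((μ : ℝ) + 1) * lam / 2 ∧
    SC y = (μ : ℝ) * lam * y + ((μ : ℝ) + 1) * (lam / 2) * y
      + ((μ : ℝ) + 1) * (lam / 2) * (y - 1) ∧
    SC y ≥ (3 * (μ : ℝ) + 1) * lam / 2 ∧
    SC y / SC 0 ≥ (3 * (μ : ℝ) + 1) / ((μ : ℝ) + 1) ∧
    Filter.Tendsto (fun m : ℕ => (3 * (m : ℝ) + 1) / ((m : ℝ) + 1))
      Filter.atTop (nhds 3) := by
  have hSC0 : SC 0 = ((μ : ℝ) + 1) * lam / 2 := by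
    rw [hSC, sub_self, abs_zero, zero_sub, abs_neg, abs_one]
    ring
  have hSCy : SC y = (μ : ℝ) * lam * y + ((μ : ℝ) + 1) * (lam / 2) * y
      + ((μ : ℝ) + 1) * (lam / 2) * (y - 1) := by
    rw [hSC, abs_of_nonneg (by linarith), abs_of_nonneg (by linarith), sub_zero]
  have hSCy_lower : SC y ≥ (3 * (μ : ℝ) + 1) * lam / 2 := by
    have hslope : SC y = (3 * (μ : ℝ) + 1) * lam / 2 + (2 * μ + 1) * lam * (y - 1) := by
      rw [hSCy]
      ring
    rw [hslope, ge_iff_le, le_add_iff_nonneg_right]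
    exact mul_nonneg (by positivity) (by linarith)
  have hratio : SC y / SC 0 ≥ (3 * (μ : ℝ) + 1) / ((μ : ℝ) + 1) := by
    rw [hSC0, ge_iff_le, ← mul_div_mul_right _ _ (half_pos hlam).ne', ← mul_div_assoc,
      ← mul_div_assoc]
    gcongr
  exact ⟨hSC0, hSCy, hSCy_lower, hratio, tendsto_three_mul_add_one_div_add_one⟩

theorem stmt_18 (lam y : ℝ) (hlam : 0 < lam) (hy : y ≥ 1)
    (μ : ℕ) (hμ : 1 ≤ μ)
    (SC : ℝ → ℝ)
    (hSC : ∀ t, SC t = (μ : ℝ) * lam * |t - 0|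
      + ((μ : ℝ) + 1) * (lam / 2) * |t - 0|
      + ((μ : ℝ) + 1) * (lam / 2) * |t - 1|) :
    SC 0 = ((μ : ℝ) + 1) * lam / 2 ∧
    SC y = (μ : ℝ) * lam * y + ((μ : ℝ) + 1) * (lam / 2) * y
      + ((μ : ℝ) + 1) * (lam / 2) * (y - 1) ∧
    SC y ≥ (3 * (μ : ℝ) + 1) * lam / 2 ∧
    SC y / SC 0 ≥ (3 * (μ : ℝ) + 1) / ((μ : ℝ) + 1) ∧
    Filter.Tendsto (fun m : ℕ => (3 * (m : ℝ) + 1) / ((m : ℝ) + 1))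
      Filter.atTop (nhds 3) :=
  stmt_18_general lam y hlam hy μ SC hSC
end
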